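/- arXiv:1408.1301 — 2 statements merged into one kernel-verified Lean document; each statement's English description precedes it below -/
import Mathlib

section
/- Let X, X_1, X_2, … be i.i.d. real random variables. Then E[e^{W(|X|)}] < ∞ implies X_n/(n log n) → 0 almost surely as n → ∞. -/
/-!
By the first Borel–Cantelli lemma, integrability of `e^{W(|X|)}` gives, for every `ε > 0`,
`e^{W(|Xₙ|)} < ε n` for all large `n`, almost surely. Since `W` inverts `w ↦ w e^w`, a bound
`|Xₙ| ≥ ε n log n` would force `e^{W(|Xₙ|)} ≥ ε n` (test `w = log (ε n)`). Hence almost surely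
`|Xₙ| < ε n log n` eventually, simultaneously for the countably many `ε = 1/(k+1)`.
-/

open MeasureTheory Filter ProbabilityTheory Real

def IsLambertW (W : ℝ → ℝ) : Prop :=
  ∀ z, 0 ≤ z → 0 ≤ W z ∧ W z * exp (W z) = z

namespace IsLambertW

variable {W : ℝ → ℝ}

theorem le_of_mul_exp_le (hW : IsLambertW W) {z w : ℝ} (hz : 0 ≤ z)
    (h : w * exp w ≤ z) : w ≤ W z := by
  by_contra! hlt
  obtain ⟨hWz, hWz_eq⟩ := hW z hz
  have : z < w * exp w :=
    calc z = W z * exp (W z) := hWz_eq.symm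
      _ ≤ W z * exp w := by gcongr
      _ < w * exp w := by gcongr
  linarith

theorem measurable_comp_abs (hW : IsLambertW W) : Measurable fun t => W |t| := by
  have hmono : Monotone fun s => W (max s 0) := fun a b hab =>
    hW.le_of_mul_exp_le (le_max_right b 0)
      ((hW _ (le_max_right a 0)).2.trans_le (max_le_max hab le_rfl))
  convert hmono.measurable.comp measurable_abs using 1
  ext t
  simp

theorem le_exp_div_of_mul_mul_log_le (hW : IsLambertW W) {ε x t : ℝ} (hε : 0 < ε)
    (hε₁ : ε ≤ 1) (hx : 1 ≤ x) (h : ε * (x * log x) ≤ t) : x ≤ exp (W t) / ε := by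
  have ht : 0 ≤ t := le_trans (by have := log_nonneg hx; positivity) h
  rw [le_div_iff₀ hε, mul_comm]
  rcases le_total (ε * x) 1 with hsmall | hlarge
  · exact hsmall.trans (one_le_exp (hW t ht).1)
  · have hεx : exp (log (ε * x)) = ε * x := exp_log (by positivity)
    have hlog : log (ε * x) ≤ W t := by
      refine hW.le_of_mul_exp_le ht ?_
      calc log (ε * x) * exp (log (ε * x)) = ε * (x * log (ε * x)) := by rw [hεx]; ring
        _ ≤ ε * (x * log x) := by
          gcongr
          nlinarith
        _ ≤ t := h
    simpa [hεx] using exp_le_exp.2 hlog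

end IsLambertW

theorem tendsto_div_nhds_zero_of_forall_eventually_abs_lt {ι : Type*} {l : Filter ι}
    {u v : ι → ℝ} (h : ∀ k : ℕ, ∀ᶠ i in l, |u i| < ((k : ℝ) + 1)⁻¹ * v i) :
    Tendsto (fun i => u i / v i) l (nhds 0) := by
  rw [Metric.tendsto_nhds]
  intro δ hδ
  obtain ⟨k, hk⟩ := exists_nat_one_div_lt hδ
  filter_upwards [h k] with i hi
  have hv : 0 < v i := pos_of_mul_pos_right ((abs_nonneg _).trans_lt hi) (by positivity)
  rw [Real.dist_eq, sub_zero, abs_div, abs_of_pos hv, div_lt_iff₀ hv]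
  calc |u i| < ((k : ℝ) + 1)⁻¹ * v i := hi
    _ < δ * v i := by gcongr; simpa using hk

section BorelCantelli

variable {Ω : Type*} [MeasureSpace Ω] [IsProbabilityMeasure (ℙ : Measure Ω)]

theorem ae_eventually_lt_natCast_of_identDistrib {Y : ℕ → Ω → ℝ}
    (hident : ∀ n, IdentDistrib (Y n) (Y 0)) (hint : Integrable (Y 0)) :
    ∀ᵐ ω, ∀ᶠ n : ℕ in atTop, Y n ω < n := by
  set g : ℝ → ℝ := fun t => |t| + 1
  have hg : Measurable g := measurable_abs.add_const 1
  have hsum := tsum_prob_mem_Ioi_lt_top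
    (hint.abs.add (integrable_const 1) : Integrable fun ω => g (Y 0 ω))
    (fun ω => by positivity)
  have hmem : ∀ n : ℕ,
      ℙ {ω | g (Y n ω) ∈ Set.Ioi (n : ℝ)} = ℙ {ω | g (Y 0 ω) ∈ Set.Ioi (n : ℝ)} :=
    fun n => ((hident n).comp hg).measure_mem_eq measurableSet_Ioi
  filter_upwards [ae_eventually_notMem (s := fun n : ℕ => {ω | g (Y n ω) ∈ Set.Ioi (n : ℝ)})
    (by simpa only [hmem] using hsum.ne)] with ω hω
  filter_upwards [hω] with n hn
  simp only [Set.mem_Ioi, not_lt, g] at hn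
  linarith [le_abs_self (Y n ω)]

theorem IsLambertW.ae_eventually_abs_lt_mul_mul_log {W : ℝ → ℝ} (hW : IsLambertW W)
    {X : ℕ → Ω → ℝ} (hident : ∀ n, IdentDistrib (X n) (X 0))
    (hint : Integrable fun ω => exp (W |X 0 ω|)) {ε : ℝ} (hε : 0 < ε) (hε₁ : ε ≤ 1) :
    ∀ᵐ ω, ∀ᶠ n : ℕ in atTop, |X n ω| < ε * (n * log n) := by
  have hu : Measurable fun t => exp (W |t|) / ε :=
    (measurable_exp.comp hW.measurable_comp_abs).div_const ε
  filter_upwards [ae_eventually_lt_natCast_of_identDistrib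
    (fun n => (hident n).comp hu) (hint.div_const ε)] with ω hω
  filter_upwards [hω, eventually_ge_atTop 1] with n hn hn₁
  by_contra! hle
  exact (hW.le_exp_div_of_mul_mul_log_le hε hε₁ (by exact_mod_cast hn₁) hle).not_gt hn

end BorelCantelli

theorem iid_exp_lambertW_integrable_implies_ae_tendsto_general {Ω : Type*} [MeasureSpace Ω]
    [IsProbabilityMeasure (volume : Measure Ω)]
    (W : ℝ → ℝ) (hW : ∀ z, 0 ≤ z → 0 ≤ W z ∧ W z * Real.exp (W z) = z)
    (X : ℕ → Ω → ℝ)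
    (hident : ∀ n, IdentDistrib (X n) (X 0))
    (hint : Integrable (fun ω => Real.exp (W |X 0 ω|))) :
    ∀ᵐ ω, Tendsto (fun n : ℕ => X n ω / (n * Real.log n)) atTop (nhds 0) := by
  have hε : ∀ k : ℕ, ∀ᵐ ω, ∀ᶠ n : ℕ in atTop,
      |X n ω| < ((k : ℝ) + 1)⁻¹ * (n * Real.log n) := fun k =>
    IsLambertW.ae_eventually_abs_lt_mul_mul_log hW hident hint (by positivity)
      (inv_le_one_of_one_le₀ (by simp))
  filter_upwards [ae_all_iff.2 hε] with ω hω
  exact tendsto_div_nhds_zero_of_forall_eventually_abs_lt hω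

/-- For an i.i.d. sequence `(Xₙ)`, the moment condition `E[e^{W(|X₀|)}] < ∞` implies
`Xₙ/(n log n) → 0` almost surely. -/
theorem iid_exp_lambertW_integrable_implies_ae_tendsto {Ω : Type*} [MeasureSpace Ω]
    [IsProbabilityMeasure (volume : Measure Ω)]
    (W : ℝ → ℝ) (hW : ∀ z, 0 ≤ z → 0 ≤ W z ∧ W z * Real.exp (W z) = z)
    (X : ℕ → Ω → ℝ) (hmeas : ∀ n, Measurable (X n))
    (hindep : iIndepFun X)
    (hident : ∀ n, IdentDistrib (X n) (X 0))
    (hint : Integrable (fun ω => Real.exp (W |X 0 ω|))) :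
    ∀ᵐ ω, Tendsto (fun n : ℕ => X n ω / (n * Real.log n)) atTop (nhds 0) :=
  iid_exp_lambertW_integrable_implies_ae_tendsto_general W hW X hident hint
end

section
/- Let X, X_1, X_2, … be i.i.d. real random variables. If X_n/(n log n) → 0 almost surely, then E[e^{W(|X|)}] < ∞ (equivalently E[|X|/(1 + log₊|X|)] < ∞). -/
/-!
If `Xₙ / (n log n) → 0` almost surely, then almost surely `|Xₙ| ≤ n log n` for all large `n`,
so by the second Borel–Cantelli lemma (the events `{n log n < |Xₙ|}` are independent) and
identical distribution, `∑ₙ P(n log n < |X|) < ∞`. Since `x ↦ x eˣ` is strictly increasing on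
`[0, ∞)`, for `c ≥ 1` one has `c < e^{W z} ↔ c log c < z`, so this series dominates (up to its
first term) `∑ₙ P(n < e^{W|X|})`, which bounds `E[e^{W|X|}]` from above.
-/

open MeasureTheory Filter ProbabilityTheory Set Topology

theorem eventually_abs_le_of_tendsto_div_zero {ι : Type*} {l : Filter ι} {x a : ι → ℝ}
    (hx : Tendsto (fun i => x i / a i) l (𝓝 0)) (ha : ∀ᶠ i in l, 0 < a i) :
    ∀ᶠ i in l, |x i| ≤ a i := by
  filter_upwards [ha, hx.eventually (Ioo_mem_nhds neg_one_lt_zero one_pos)] with i hai hi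
  have : |x i| / a i < 1 := by rwa [← abs_of_pos hai, ← abs_div, abs_lt, ← mem_Ioo]
  exact ((div_lt_one hai).1 this).le

theorem lintegral_ofReal_le_tsum_measure_lt {α : Type*} [MeasurableSpace α] (μ : Measure α)
    {f : α → ℝ} (hf : Measurable f) :
    ∫⁻ a, ENNReal.ofReal (f a) ∂μ ≤ ∑' n : ℕ, μ {a | (n : ℝ) < f a} := by
  have hS : ∀ n : ℕ, MeasurableSet {a | (n : ℝ) < f a} :=
    fun n => measurableSet_lt measurable_const hf
  have hpoint : ∀ a, ENNReal.ofReal (f a) ≤ ∑' n : ℕ, {b | (n : ℝ) < f b}.indicator 1 a := by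
    intro a
    have hceil : ∀ n ∈ Finset.range ⌈f a⌉₊, {b | (n : ℝ) < f b}.indicator (1 : α → ENNReal) a = 1 :=
      fun n hn => indicator_of_mem (s := {b | (n : ℝ) < f b})
        (Nat.lt_ceil.1 (Finset.mem_range.1 hn)) 1
    calc ENNReal.ofReal (f a) ≤ ⌈f a⌉₊ :=
          (ENNReal.ofReal_le_ofReal (Nat.le_ceil _)).trans_eq (ENNReal.ofReal_natCast _)
      _ = ∑ n ∈ Finset.range ⌈f a⌉₊, {b | (n : ℝ) < f b}.indicator 1 a := by
          simp [Finset.sum_congr rfl hceil]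
      _ ≤ ∑' n : ℕ, {b | (n : ℝ) < f b}.indicator 1 a := ENNReal.sum_le_tsum _
  calc ∫⁻ a, ENNReal.ofReal (f a) ∂μ ≤ ∫⁻ a, ∑' n : ℕ, {a | (n : ℝ) < f a}.indicator 1 a ∂μ :=
        lintegral_mono hpoint
    _ = ∑' n : ℕ, μ {a | (n : ℝ) < f a} := by
        rw [lintegral_tsum fun n => (measurable_one.indicator (hS n)).aemeasurable]
        exact tsum_congr fun n => lintegral_indicator_one (hS n)

namespace ProbabilityTheory

variable {Ω β : Type*} [MeasurableSpace Ω] [MeasurableSpace β] {μ : Measure Ω}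
  {X : ℕ → Ω → β} {B : ℕ → Set β}

theorem iIndepFun.ae_frequently_mem (hindep : iIndepFun X μ) (hmeas : ∀ n, Measurable (X n))
    (hB : ∀ n, MeasurableSet (B n)) (hsum : ∑' n, μ (X n ⁻¹' B n) = ⊤) :
    ∀ᵐ ω ∂μ, ∃ᶠ n in atTop, X n ω ∈ B n := by
  have := hindep.isProbabilityMeasure
  have hA : ∀ n, MeasurableSet (X n ⁻¹' B n) := fun n => hmeas n (hB n)
  have hAind : iIndepSet (fun n => X n ⁻¹' B n) μ :=
    (iIndepSet_iff_meas_biInter hA).2 fun _ => hindep.meas_biInter fun i _ => ⟨_, hB i, rfl⟩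
  have hlimsup := measure_limsup_eq_one hA hAind hsum
  rw [← prob_compl_eq_zero_iff (MeasurableSet.measurableSet_limsup hA)] at hlimsup
  exact (ae_iff.2 hlimsup).mono fun ω hω => mem_limsup_iff_frequently_mem.1 hω

theorem iIndepFun.tsum_measure_preimage_ne_top (hindep : iIndepFun X μ)
    (hmeas : ∀ n, Measurable (X n)) (hB : ∀ n, MeasurableSet (B n))
    (hev : ∀ᵐ ω ∂μ, ∀ᶠ n in atTop, X n ω ∉ B n) :
    ∑' n, μ (X n ⁻¹' B n) ≠ ⊤ := by
  have := hindep.isProbabilityMeasure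
  intro hsum
  obtain ⟨ω, hfreq, hev⟩ := ((hindep.ae_frequently_mem hmeas hB hsum).and hev).exists
  obtain ⟨n, hmem, hnot⟩ := (hfreq.and_eventually hev).exists
  exact hnot hmem

end ProbabilityTheory

theorem strictMonoOn_mul_exp : StrictMonoOn (fun x : ℝ => x * Real.exp x) (Ici 0) :=
  fun a ha _ _ hab => mul_lt_mul'' hab (Real.exp_lt_exp.2 hab) ha (Real.exp_pos a).le

section LambertW

variable {W : ℝ → ℝ}

theorem monotoneOn_lambertW (hW : ∀ z, 0 ≤ z → 0 ≤ W z ∧ W z * Real.exp (W z) = z) :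
    MonotoneOn W (Ici 0) := by
  intro a ha b hb hab
  rw [← strictMonoOn_mul_exp.le_iff_le (hW a ha).1 (hW b hb).1]
  simpa only [(hW a ha).2, (hW b hb).2] using hab

theorem lt_exp_lambertW_iff (hW : ∀ z, 0 ≤ z → 0 ≤ W z ∧ W z * Real.exp (W z) = z)
    {c z : ℝ} (hc : 1 ≤ c) (hz : 0 ≤ z) :
    c < Real.exp (W z) ↔ c * Real.log c < z := by
  have hc0 : 0 < c := by linarith
  obtain ⟨hW0, hWz⟩ := hW z hz
  calc c < Real.exp (W z) ↔ Real.log c < W z := (Real.log_lt_iff_lt_exp hc0).symm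
    _ ↔ Real.log c * Real.exp (Real.log c) < W z * Real.exp (W z) :=
        (strictMonoOn_mul_exp.lt_iff_lt (Real.log_nonneg hc) hW0).symm
    _ ↔ c * Real.log c < z := by rw [Real.exp_log hc0, hWz, mul_comm]

theorem measurable_lambertW_abs (hW : ∀ z, 0 ≤ z → 0 ≤ W z ∧ W z * Real.exp (W z) = z) :
    Measurable fun x : ℝ => W |x| := by
  have hmono : Monotone fun x : ℝ => W (max x 0) := fun a b hab =>
    monotoneOn_lambertW hW (le_max_right a 0) (le_max_right b 0) (max_le_max_right 0 hab)
  simpa only [Function.comp_def, abs_nonneg, max_eq_left] using hmono.measurable.comp measurable_abs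

theorem integrable_exp_lambertW_abs_of_tsum_ne_top
    (hW : ∀ z, 0 ≤ z → 0 ≤ W z ∧ W z * Real.exp (W z) = z)
    {Ω : Type*} [MeasurableSpace Ω] {μ : Measure Ω} [IsFiniteMeasure μ] {Z : Ω → ℝ}
    (hZ : Measurable Z) (hsum : ∑' n : ℕ, μ {ω | (n : ℝ) * Real.log n < |Z ω|} ≠ ⊤) :
    Integrable (fun ω => Real.exp (W |Z ω|)) μ := by
  have hY : Measurable fun ω => Real.exp (W |Z ω|) :=
    Real.measurable_exp.comp ((measurable_lambertW_abs hW).comp hZ)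
  have hlevel : ∀ n : ℕ, {ω | ((n + 1 : ℕ) : ℝ) < Real.exp (W |Z ω|)} =
      {ω | ((n + 1 : ℕ) : ℝ) * Real.log (n + 1 : ℕ) < |Z ω|} := fun n => by
    ext ω
    exact lt_exp_lambertW_iff hW (Nat.one_le_cast.2 n.succ_pos) (abs_nonneg _)
  refine ⟨hY.aestronglyMeasurable, ?_⟩
  rw [hasFiniteIntegral_iff_ofReal (ae_of_all _ fun ω => (Real.exp_pos _).le)]
  calc ∫⁻ ω, ENNReal.ofReal (Real.exp (W |Z ω|)) ∂μ
      ≤ ∑' n : ℕ, μ {ω | (n : ℝ) < Real.exp (W |Z ω|)} :=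
        lintegral_ofReal_le_tsum_measure_lt μ hY
    _ = μ {ω | ((0 : ℕ) : ℝ) < Real.exp (W |Z ω|)} +
          ∑' n : ℕ, μ {ω | ((n + 1 : ℕ) : ℝ) < Real.exp (W |Z ω|)} :=
        tsum_eq_zero_add' ENNReal.summable
    _ ≤ μ univ + ∑' n : ℕ, μ {ω | (n : ℝ) * Real.log n < |Z ω|} := by
        simp_rw [hlevel]
        exact add_le_add (measure_mono (subset_univ _))
          (ENNReal.tsum_comp_le_tsum_of_injective (add_left_injective 1)
            fun n : ℕ => μ {ω | (n : ℝ) * Real.log n < |Z ω|})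
    _ < ⊤ := ENNReal.add_lt_top.2 ⟨measure_lt_top _ _, hsum.lt_top⟩

end LambertW

/-- For an i.i.d. sequence `(Xₙ)`, if `Xₙ/(n log n) → 0` almost surely then
`E[e^{W(|X₀|)}] < ∞`. -/
theorem iid_ae_tendsto_implies_exp_lambertW_integrable {Ω : Type*} [MeasureSpace Ω]
    [IsProbabilityMeasure (volume : Measure Ω)]
    (W : ℝ → ℝ) (hW : ∀ z, 0 ≤ z → 0 ≤ W z ∧ W z * Real.exp (W z) = z)
    (X : ℕ → Ω → ℝ) (hmeas : ∀ n, Measurable (X n))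
    (hindep : iIndepFun X)
    (hident : ∀ n, IdentDistrib (X n) (X 0))
    (htend : ∀ᵐ ω, Tendsto (fun n : ℕ => X n ω / (n * Real.log n)) atTop (nhds 0)) :
    Integrable (fun ω => Real.exp (W |X 0 ω|)) := by
  have hB : ∀ n : ℕ, MeasurableSet {x : ℝ | (n : ℝ) * Real.log n < |x|} :=
    fun n => measurableSet_lt measurable_const measurable_abs
  have hpos : ∀ᶠ n : ℕ in atTop, 0 < (n : ℝ) * Real.log n :=
    (eventually_gt_atTop 1).mono fun n hn => by
      have hn' : (1 : ℝ) < n := by exact_mod_cast hn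
      exact mul_pos (by linarith) (Real.log_pos hn')
  have hbound : ∀ᵐ ω, ∀ᶠ n : ℕ in atTop, X n ω ∉ {x : ℝ | (n : ℝ) * Real.log n < |x|} :=
    htend.mono fun ω hω => (eventually_abs_le_of_tendsto_div_zero hω hpos).mono fun _ => not_lt.2
  have hsum := hindep.tsum_measure_preimage_ne_top hmeas hB hbound
  simp_rw [fun n => (hident n).measure_mem_eq (hB n)] at hsum
  exact integrable_exp_lambertW_abs_of_tsum_ne_top hW (hmeas 0) hsum
end
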